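/- arXiv:1202.1237 — 2 statements merged into one kernel-verified Lean document; each statement's English description precedes it below -/
import Mathlib

section
/- For every nonnegative integer n and variable x, the Legendre polynomial satisfies P_{2n+1}(x) = x \sum_{k=0}^{n} \binom{n}{k} \binom{-3/2 - n}{k} (1 - x^2)^k. -/
open Polynomial Finset

/-- The Legendre polynomials over `ℚ`, defined by the three-term recurrence
`P₀ = 1`, `P₁ = X`, `(n+2)·P_{n+2} = (2n+3)·X·P_{n+1} - (n+1)·P_n`. -/
noncomputable def legendreP : ℕ → Polynomial ℚ
  | 0 => 1
  | 1 => X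
  | n + 2 => C ((n + 2 : ℚ))⁻¹ *
      (C (2 * (n : ℚ) + 3) * X * legendreP (n + 1) - C ((n : ℚ) + 1) * legendreP n)

/-- The generalized binomial coefficient `a(a-1)⋯(a-k+1)/k!`. -/
def gchoose (a : ℚ) (k : ℕ) : ℚ :=
  (∏ i ∈ Finset.range k, (a - i)) / (Nat.factorial k)

/-!
With `u = 1 - x²` and `F(n, a) = ∑ₖ C(n,k) C(a,k) uᵏ` (a terminating `₂F₁(-n, -a; 1; u)`), the
formula `P_{2n+1} = x·F(n, -3/2-n)` is proved jointly with its even companion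
`P_{2n} = F(n, -1/2-n)` by induction on `n`. Substituting both into the three-term recurrence
(with `x² = 1 - u`) reduces each step to a contiguous relation between such sums, which holds
coefficientwise by the two recurrences `C(a,k+1)(k+1) = C(a,k)(a-k)` and `C(a-1,k)·a = C(a,k)(a-k)`,
applied both to `a` and to the ordinary binomials `C(n,k)`.
-/

lemma gchoose_zero_right (a : ℚ) : gchoose a 0 = 1 := by
  simp [gchoose]

lemma gchoose_succ_mul (a : ℚ) (k : ℕ) :
    gchoose a (k + 1) * (k + 1) = gchoose a k * (a - k) := by
  simp only [gchoose, prod_range_succ, Nat.factorial_succ]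
  push_cast
  field_simp

lemma gchoose_sub_one_mul (a : ℚ) (k : ℕ) :
    gchoose (a - 1) k * a = gchoose a k * (a - k) := by
  induction k with
  | zero => simp [gchoose_zero_right]
  | succ k ih =>
    have hk : (k + 1 : ℚ) ≠ 0 := by positivity
    apply mul_right_cancel₀ hk
    push_cast
    linear_combination a * gchoose_succ_mul (a - 1) k - (a - k - 1) * gchoose_succ_mul a k
      + (a - 1 - k) * ih

lemma gchoose_natCast (n k : ℕ) : gchoose n k = n.choose k := by
  rw [Nat.cast_choose_eq_descPochhammer_div, descPochhammer_eval_eq_prod_range, gchoose]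

lemma cast_choose_succ_mul (n k : ℕ) :
    (n.choose (k + 1) : ℚ) * (k + 1) = n.choose k * (n - k) := by
  simpa only [gchoose_natCast] using gchoose_succ_mul n k

lemma cast_choose_mul_succ (n k : ℕ) :
    (n.choose k : ℚ) * (n + 1) = (n + 1).choose k * (n + 1 - k) := by
  rw [← gchoose_natCast, ← gchoose_natCast]
  push_cast
  simpa using gchoose_sub_one_mul (n + 1) k

def chooseSum (n : ℕ) (a u : ℚ) : ℚ :=
  ∑ k ∈ range (n + 1), (n.choose k : ℚ) * gchoose a k * u ^ k

lemma chooseSum_eq_sum_range_add_two (n : ℕ) (a u : ℚ) :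
    chooseSum n a u = ∑ k ∈ range (n + 2), (n.choose k : ℚ) * gchoose a k * u ^ k := by
  simp [chooseSum, sum_range_succ _ (n + 1)]

lemma choose_mul_gchoose_odd_step (n k : ℕ) :
    (2 * n + 3 : ℚ) * (n + 1).choose k * gchoose (-5/2 - n) k
      = ((4 * n + 5 : ℚ) * (n + 1).choose k - (2 * n + 2) * n.choose k) * gchoose (-3/2 - n) k := by
  set a : ℚ := -3/2 - n with ha
  have ha0 : a ≠ 0 := by rw [ha]; linarith [(n.cast_nonneg : (0 : ℚ) ≤ n)]
  rw [show -5/2 - (n : ℚ) = a - 1 by rw [ha]; ring]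
  apply mul_left_cancel₀ ha0
  linear_combination (2 * n + 3 : ℚ) * (n + 1).choose k * gchoose_sub_one_mul a k
    + 2 * gchoose a k * a * cast_choose_mul_succ n k

lemma choose_mul_gchoose_even_step (n k : ℕ) :
    (2 * n + 2 : ℚ) * (n + 1).choose (k + 1) * gchoose (-3/2 - n) (k + 1)
      - (4 * n + 3 : ℚ) * n.choose (k + 1) * gchoose (-3/2 - n) (k + 1)
      + (2 * n + 1 : ℚ) * n.choose (k + 1) * gchoose (-1/2 - n) (k + 1)
      = -(4 * n + 3 : ℚ) * n.choose k * gchoose (-3/2 - n) k := by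
  set b : ℚ := -1/2 - n with hb
  have hb0 : b ≠ 0 := by rw [hb]; linarith [(n.cast_nonneg : (0 : ℚ) ≤ n)]
  have hk : (k + 1 : ℚ) ≠ 0 := by positivity
  have hc : (n.choose (k + 1) : ℚ) = n.choose k * (n - k) / (k + 1) :=
    (eq_div_iff hk).2 (cast_choose_succ_mul n k)
  have hc' : ((n + 1).choose (k + 1) : ℚ) = n.choose k * (n + 1) / (k + 1) :=
    (eq_div_iff hk).2 (by
      rw [mul_comm (n.choose k : ℚ)]; exact_mod_cast (Nat.add_one_mul_choose_eq n k).symm)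
  have hg : gchoose b (k + 1) = gchoose b k * (b - k) / (k + 1) :=
    (eq_div_iff hk).2 (gchoose_succ_mul b k)
  have hg' : gchoose (b - 1) (k + 1) = gchoose (b - 1) k * (b - 1 - k) / (k + 1) :=
    (eq_div_iff hk).2 (by simpa [sub_sub] using gchoose_succ_mul (b - 1) k)
  have hg'' : gchoose (b - 1) k = gchoose b k * (b - k) / b :=
    (eq_div_iff hb0).2 (gchoose_sub_one_mul b k)
  rw [show -3/2 - (n : ℚ) = b - 1 by rw [hb]; ring, hc, hc', hg, hg', hg'']
  field_simp
  rw [hb]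
  ring

lemma chooseSum_odd_step (n : ℕ) (u : ℚ) :
    (2 * n + 3 : ℚ) * chooseSum (n + 1) (-5/2 - n) u
      = (4 * n + 5 : ℚ) * chooseSum (n + 1) (-3/2 - n) u
        - (2 * n + 2) * chooseSum n (-3/2 - n) u := by
  rw [chooseSum_eq_sum_range_add_two n, chooseSum, chooseSum, mul_sum, mul_sum, mul_sum,
    ← sum_sub_distrib]
  refine sum_congr rfl fun k _ => ?_
  linear_combination u ^ k * choose_mul_gchoose_odd_step n k

lemma chooseSum_even_step (n : ℕ) (u : ℚ) :
    (2 * n + 2 : ℚ) * chooseSum (n + 1) (-3/2 - n) u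
      = (4 * n + 3 : ℚ) * (1 - u) * chooseSum n (-3/2 - n) u
        - (2 * n + 1) * chooseSum n (-1/2 - n) u := by
  have hrel : (2 * n + 2 : ℚ) * chooseSum (n + 1) (-3/2 - n) u
      - (4 * n + 3 : ℚ) * chooseSum n (-3/2 - n) u + (2 * n + 1) * chooseSum n (-1/2 - n) u
      = -(4 * n + 3 : ℚ) * u * chooseSum n (-3/2 - n) u :=
    calc _ = ∑ k ∈ range (n + 2), ((2 * n + 2 : ℚ) * (n + 1).choose k * gchoose (-3/2 - n) k
          - (4 * n + 3 : ℚ) * n.choose k * gchoose (-3/2 - n) k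
          + (2 * n + 1 : ℚ) * n.choose k * gchoose (-1/2 - n) k) * u ^ k := by
          rw [chooseSum_eq_sum_range_add_two n, chooseSum_eq_sum_range_add_two n, chooseSum]
          simp only [mul_sum, ← sum_sub_distrib, ← sum_add_distrib]
          exact sum_congr rfl fun k _ => by ring
      _ = -(4 * n + 3 : ℚ) * u * chooseSum n (-3/2 - n) u + 0 := by
          rw [sum_range_succ']
          congr 1
          · rw [chooseSum, mul_sum]
            refine sum_congr rfl fun k _ => ?_
            linear_combination u ^ (k + 1) * choose_mul_gchoose_even_step n k
          · simp only [Nat.choose_zero_right, gchoose_zero_right]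
            ring
      _ = _ := add_zero _
  linear_combination hrel

lemma eval_legendreP_add_two (m : ℕ) (x : ℚ) :
    (m + 2 : ℚ) * (legendreP (m + 2)).eval x
      = (2 * m + 3) * x * (legendreP (m + 1)).eval x - (m + 1) * (legendreP m).eval x := by
  rw [legendreP]
  simp only [eval_mul, eval_sub, eval_C, eval_X]
  field_simp

lemma eval_legendreP_even_odd (n : ℕ) (x : ℚ) :
    (legendreP (2 * n)).eval x = chooseSum n (-1/2 - n) (1 - x ^ 2) ∧
      (legendreP (2 * n + 1)).eval x = x * chooseSum n (-3/2 - n) (1 - x ^ 2) := by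
  induction n with
  | zero => simp [legendreP, chooseSum, gchoose_zero_right]
  | succ n ih =>
    obtain ⟨hEven, hOdd⟩ := ih
    have hEven' : (legendreP (2 * n + 2)).eval x = chooseSum (n + 1) (-3/2 - n) (1 - x ^ 2) := by
      have hrec := eval_legendreP_add_two (2 * n) x
      rw [hEven, hOdd] at hrec
      apply mul_left_cancel₀ (by positivity : (2 * n + 2 : ℚ) ≠ 0)
      push_cast at hrec
      linear_combination hrec - chooseSum_even_step n (1 - x ^ 2)
    have hOdd' : (legendreP (2 * n + 3)).eval x
        = x * chooseSum (n + 1) (-5/2 - n) (1 - x ^ 2) := by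
      have hrec := eval_legendreP_add_two (2 * n + 1) x
      rw [hEven', hOdd] at hrec
      apply mul_left_cancel₀ (by positivity : (2 * n + 3 : ℚ) ≠ 0)
      push_cast at hrec
      linear_combination hrec - x * chooseSum_odd_step n (1 - x ^ 2)
    push_cast
    rw [show -1/2 - ((n : ℚ) + 1) = -3/2 - n by ring, show -3/2 - ((n : ℚ) + 1) = -5/2 - n by ring]
    exact ⟨hEven', hOdd'⟩

theorem legendre_odd_sum (n : ℕ) (x : ℚ) :
    (legendreP (2 * n + 1)).eval x =
      x * ∑ k ∈ Finset.range (n + 1),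
        (n.choose k : ℚ) * gchoose (-3/2 - (n : ℚ)) k * (1 - x ^ 2) ^ k :=
  (eval_legendreP_even_odd n x).2
end

section
/- Let p be an odd prime and t a p-integral rational with t \not\equiv 0 (mod p). Let n = \langle -1/8 \rangle_p be the residue of -1/8 modulo p. Then \sum_{k=0}^{p-1} \binom{-1/8}{k} \binom{-3/8}{k} (1-t)^k \equiv t^n \sum_{k=0}^{p-1} \binom{-1/8}{k} \binom{-5/8}{k} (1 - 1/t)^k (mod p). -/
/-- A rational number is `p`-integral if `p` does not divide its denominator. -/
def pInt (p : ℕ) (r : ℚ) : Prop := ¬ (p ∣ r.den)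

/-- Congruence modulo `p` in the ring of `p`-integral rationals:
`r ≡ s (mod p)` iff `r - s = p·c` for some `p`-integral rational `c`. -/
def pCong (p : ℕ) (r s : ℚ) : Prop := ∃ c : ℚ, pInt p c ∧ r - s = p * c

/-!
Reduction mod `p` is a ring homomorphism on `p`-integral rationals; for `k < p` it sends
`gchoose a k` to `(descPochhammer k).eval ā / k!`, where `ā` is the reduction of `a`. This is
`N.choose k` when `ā = N` is a natural number and `(-1)^k (m + k).choose k` when `ā = -1 - m`.
With `n = ⟨-1/8⟩`, `m = ⟨-3/8⟩` and `-5/8 = -1 - (-3/8)`, and after splitting `t^n = t^k t^(n-k)`,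
the congruence becomes the identity
`∑ C(n,k) C(m,k) x^k = ∑ C(n,k) C(m+k,k) x^k (1-x)^(n-k)` at `x = 1 - t`. It holds in every
commutative ring: expand `1 = (x + (1-x))^(n-k)` on the left and collect powers of `x` by
Vandermonde's identity.
-/

open Finset Polynomial
open scoped Nat

theorem sum_range_choose_mul_choose_mul_choose (n m r : ℕ) :
    ∑ k ∈ range (r + 1), n.choose k * m.choose k * (n - k).choose (r - k)
      = n.choose r * (m + r).choose r := by
  rw [Nat.add_choose_eq, Nat.sum_antidiagonal_eq_sum_range_succ_mk, mul_sum]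
  refine sum_congr rfl fun k hk => ?_
  have hkr : k ≤ r := Nat.lt_succ_iff.mp (mem_range.mp hk)
  dsimp only
  rw [Nat.choose_symm hkr, mul_right_comm, ← Nat.choose_mul hkr]
  ring

theorem sum_range_choose_mul_choose_mul_pow {R : Type*} [CommRing R] {x y : R} (hxy : x + y = 1)
    (n m : ℕ) :
    ∑ k ∈ range (n + 1), (n.choose k * m.choose k : R) * x ^ k
      = ∑ k ∈ range (n + 1), (n.choose k * (m + k).choose k : R) * x ^ k * y ^ (n - k) := by
  have expand : ∀ k ∈ range (n + 1), (n.choose k * m.choose k : R) * x ^ k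
      = ∑ j ∈ range (n + 1 - k), ((n.choose k * m.choose k * (n - k).choose j : ℕ) : R)
          * x ^ (k + j) * y ^ (n - k - j) := by
    intro k hk
    rw [Nat.sub_add_comm (Nat.lt_succ_iff.mp (mem_range.mp hk))]
    calc (n.choose k * m.choose k : R) * x ^ k
        = (n.choose k * m.choose k : R) * x ^ k * (x + y) ^ (n - k) := by
          rw [hxy, one_pow, mul_one]
      _ = _ := by
          rw [add_pow, mul_sum]
          refine sum_congr rfl fun j _ => ?_
          push_cast
          ring
  rw [sum_congr rfl expand, ← sum_range_diag_flip]
  refine sum_congr rfl fun r hr => ?_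
  calc ∑ k ∈ range (r + 1), ((n.choose k * m.choose k * (n - k).choose (r - k) : ℕ) : R)
          * x ^ (k + (r - k)) * y ^ (n - k - (r - k))
      = ∑ k ∈ range (r + 1), ((n.choose k * m.choose k * (n - k).choose (r - k) : ℕ) : R)
          * x ^ r * y ^ (n - r) := by
        refine sum_congr rfl fun k hk => ?_
        rw [Nat.sub_sub, Nat.add_sub_cancel' (Nat.lt_succ_iff.mp (mem_range.mp hk))]
    _ = _ := by
        rw [← sum_mul, ← sum_mul, ← Nat.cast_sum, sum_range_choose_mul_choose_mul_choose]
        push_cast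
        ring

theorem sum_choose_mul_choose_mul_one_sub_pow {K : Type*} [Field K] {T : K} (hT : T ≠ 0)
    {n N : ℕ} (hn : n < N) (m : ℕ) :
    ∑ k ∈ range N, (n.choose k * m.choose k : K) * (1 - T) ^ k
      = T ^ n *
          ∑ k ∈ range N, (n.choose k * ((-1) ^ k * (m + k).choose k) : K) * (1 - T⁻¹) ^ k := by
  have trunc : ∀ f : ℕ → K, ∑ k ∈ range N, (n.choose k : K) * f k
      = ∑ k ∈ range (n + 1), (n.choose k : K) * f k := fun f =>
    (sum_subset (range_subset_range.2 hn) fun k _ hk => by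
      rw [Nat.choose_eq_zero_of_lt (by simpa using hk), Nat.cast_zero, zero_mul]).symm
  simp only [mul_assoc, trunc]
  simp only [← mul_assoc]
  rw [sum_range_choose_mul_choose_mul_pow (sub_add_cancel 1 T), mul_sum]
  refine sum_congr rfl fun k hk => ?_
  have hkn : k ≤ n := Nat.lt_succ_iff.mp (mem_range.mp hk)
  have hpow : T ^ k * ((-1) ^ k * (1 - T⁻¹) ^ k) = (1 - T) ^ k := by
    rw [← mul_pow, ← mul_pow]
    congr 1
    field_simp
    ring
  rw [show T ^ n = T ^ k * T ^ (n - k) by rw [← pow_add, Nat.add_sub_cancel' hkn]]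
  linear_combination (↑(n.choose k) * ↑((m + k).choose k) * T ^ (n - k) : K) * hpow.symm

theorem descPochhammer_eval_natCast_div_factorial {K : Type*} [Field K] (N : ℕ) {k : ℕ}
    (hk : (k ! : K) ≠ 0) : (descPochhammer K k).eval (N : K) / k ! = N.choose k := by
  rw [descPochhammer_eval_eq_descFactorial, Nat.descFactorial_eq_factorial_mul_choose,
    Nat.cast_mul, mul_div_cancel_left₀ _ hk]

theorem descPochhammer_eval_neg_one_sub_natCast_div_factorial {K : Type*} [Field K] (m : ℕ)
    {k : ℕ} (hk : (k ! : K) ≠ 0) :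
    (descPochhammer K k).eval (-1 - m : K) / k ! = (-1) ^ k * (m + k).choose k := by
  have h : (ascPochhammer K k).eval ((m + 1 : ℕ) : K)
      = (-1) ^ k * (descPochhammer K k).eval (-1 - m : K) := by
    rw [← ascPochhammer_eval_neg_eq_descPochhammer, neg_sub, sub_neg_eq_add, Nat.cast_add_one,
      add_comm]
  rw [← Nat.cast_ascFactorial, ← Nat.add_descFactorial_eq_ascFactorial,
    Nat.descFactorial_eq_factorial_mul_choose, Nat.cast_mul] at h
  have hsq : ((-1 : K) ^ k) ^ 2 = 1 := by rw [← pow_mul, mul_comm, pow_mul]; norm_num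
  rw [div_eq_iff hk]
  linear_combination (-(-1 : K) ^ k) * h - (descPochhammer K k).eval (-1 - m : K) * hsq

section PIntegral

variable {p : ℕ}

theorem pInt_inv_natCast {d : ℕ} (hd : ¬ p ∣ d) : pInt p (d : ℚ)⁻¹ := by
  rcases d.eq_zero_or_pos with rfl | hd0
  · exact absurd (dvd_zero p) hd
  · rwa [pInt, Rat.inv_natCast_den_of_pos hd0]

theorem pInt.den_ne_zero {r : ℚ} (hr : pInt p r) : (r.den : ZMod p) ≠ 0 :=
  mt (ZMod.natCast_eq_zero_iff _ _).1 hr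

variable [hp : Fact p.Prime]

variable (p) in
def pIntSubring : Subring ℚ where
  carrier := {r | pInt p r}
  mul_mem' {r s} hr hs h := (hp.out.dvd_mul.1 (h.trans (Rat.mul_den_dvd r s))).elim hr hs
  add_mem' {r s} hr hs h := (hp.out.dvd_mul.1 (h.trans (Rat.add_den_dvd r s))).elim hr hs
  neg_mem' {r} hr := by simpa [pInt] using hr
  one_mem' := by simpa [pInt] using hp.out.ne_one
  zero_mem' := by simpa [pInt] using hp.out.ne_one

theorem cast_mul_of_pInt {r s : ℚ} (hr : pInt p r) (hs : pInt p s) :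
    ((r * s : ℚ) : ZMod p) = r * s :=
  Rat.cast_mul_of_ne_zero hr.den_ne_zero hs.den_ne_zero

theorem cast_sub_of_pInt {r s : ℚ} (hr : pInt p r) (hs : pInt p s) :
    ((r - s : ℚ) : ZMod p) = r - s :=
  Rat.cast_sub_of_ne_zero hr.den_ne_zero hs.den_ne_zero

variable (p) in
def pIntSubring.toZMod : pIntSubring p →+* ZMod p where
  toFun r := ((r : ℚ) : ZMod p)
  map_one' := Rat.cast_one
  map_zero' := Rat.cast_zero
  map_add' r s := Rat.cast_add_of_ne_zero r.2.den_ne_zero s.2.den_ne_zero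
  map_mul' r s := cast_mul_of_pInt r.2 s.2

theorem cast_sum_of_pInt {ι : Type*} {s : Finset ι} {f : ι → ℚ}
    (hf : ∀ i ∈ s, pInt p (f i)) :
    ((∑ i ∈ s, f i : ℚ) : ZMod p) = ∑ i ∈ s, (f i : ZMod p) := by
  rw [← sum_coe_sort s f, ← sum_coe_sort s fun i => (f i : ZMod p)]
  exact (congrArg Rat.cast (AddSubmonoidClass.coe_finsetSum _ _)).symm.trans
    (map_sum (pIntSubring.toZMod p) (fun i : s => (⟨f i, hf i i.2⟩ : pIntSubring p)) univ)

theorem cast_prod_of_pInt {ι : Type*} {s : Finset ι} {f : ι → ℚ}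
    (hf : ∀ i ∈ s, pInt p (f i)) :
    ((∏ i ∈ s, f i : ℚ) : ZMod p) = ∏ i ∈ s, (f i : ZMod p) := by
  rw [← prod_coe_sort s f, ← prod_coe_sort s fun i => (f i : ZMod p)]
  exact (congrArg Rat.cast (SubmonoidClass.coe_finsetProd _ _)).symm.trans
    (map_prod (pIntSubring.toZMod p) (fun i : s => (⟨f i, hf i i.2⟩ : pIntSubring p)) univ)

theorem cast_pow_of_pInt {r : ℚ} (hr : pInt p r) (k : ℕ) :
    ((r ^ k : ℚ) : ZMod p) = (r : ZMod p) ^ k :=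
  map_pow (pIntSubring.toZMod p) ⟨r, hr⟩ k

theorem pInt_natCast (n : ℕ) : pInt p n := natCast_mem (pIntSubring p) n

theorem pCong.pInt_of_pInt_right {r s : ℚ} (h : pCong p r s) (hs : pInt p s) : pInt p r := by
  obtain ⟨c, hc, hrs⟩ := h
  rw [sub_eq_iff_eq_add.1 hrs]
  exact (pIntSubring p).add_mem ((pIntSubring p).mul_mem (pInt_natCast p) hc) hs

theorem cast_eq_zero_iff_of_pInt {d : ℚ} (hd : pInt p d) :
    (d : ZMod p) = 0 ↔ ∃ c, pInt p c ∧ d = p * c := by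
  constructor
  · intro h0
    rw [Rat.cast_def, div_eq_zero_iff, or_iff_left hd.den_ne_zero,
      ZMod.intCast_zmod_eq_zero_iff_dvd] at h0
    obtain ⟨j, hj⟩ := h0
    refine ⟨j * (d.den : ℚ)⁻¹, (pIntSubring p).mul_mem (intCast_mem (pIntSubring p) j)
      (pInt_inv_natCast hd), ?_⟩
    rw [← mul_assoc, ← div_eq_mul_inv, ← Int.cast_natCast, ← Int.cast_mul, ← hj,
      Rat.num_div_den]
  · rintro ⟨c, hc, rfl⟩
    rw [cast_mul_of_pInt (pInt_natCast p) hc, Rat.cast_natCast, ZMod.natCast_self, zero_mul]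

theorem pCong_iff_cast_eq {r s : ℚ} (hr : pInt p r) (hs : pInt p s) :
    pCong p r s ↔ (r : ZMod p) = s := by
  rw [← sub_eq_zero, ← cast_sub_of_pInt hr hs,
    cast_eq_zero_iff_of_pInt ((pIntSubring p).sub_mem hr hs), pCong]

theorem num_cast_ne_zero {r : ℚ} (h0 : (r : ZMod p) ≠ 0) : (r.num : ZMod p) ≠ 0 :=
  fun h => h0 (by rw [Rat.cast_def, h, zero_div])

theorem pInt_inv {r : ℚ} (h0 : (r : ZMod p) ≠ 0) : pInt p r⁻¹ := by
  have hr : r ≠ 0 := by rintro rfl; exact h0 Rat.cast_zero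
  rw [pInt, Rat.den_inv_of_ne_zero hr, ← Int.natCast_dvd, ← ZMod.intCast_zmod_eq_zero_iff_dvd]
  exact num_cast_ne_zero h0

theorem cast_inv_of_cast_ne_zero {r : ℚ} (h0 : (r : ZMod p) ≠ 0) :
    ((r⁻¹ : ℚ) : ZMod p) = (r : ZMod p)⁻¹ :=
  Rat.cast_inv_of_ne_zero (num_cast_ne_zero h0)

theorem not_dvd_factorial {k : ℕ} (hk : k < p) : ¬ p ∣ k ! := by
  rw [hp.out.dvd_factorial]
  omega

theorem factorial_cast_ne_zero {k : ℕ} (hk : k < p) : (k ! : ZMod p) ≠ 0 :=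
  mt (ZMod.natCast_eq_zero_iff _ _).1 (not_dvd_factorial hk)

theorem pInt_gchoose {a : ℚ} (ha : pInt p a) {k : ℕ} (hk : k < p) : pInt p (gchoose a k) := by
  rw [gchoose, div_eq_mul_inv]
  exact (pIntSubring p).mul_mem ((pIntSubring p).prod_mem fun i _ =>
    (pIntSubring p).sub_mem ha (pInt_natCast i)) (pInt_inv_natCast (not_dvd_factorial hk))

theorem cast_gchoose {a : ℚ} (ha : pInt p a) {k : ℕ} (hk : k < p) :
    ((gchoose a k : ℚ) : ZMod p) = (descPochhammer (ZMod p) k).eval (a : ZMod p) / k ! := by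
  have hsub : ∀ i ∈ range k, pInt p (a - i) := fun i _ =>
    (pIntSubring p).sub_mem ha (pInt_natCast i)
  have hfac : ((k ! : ℚ).num : ZMod p) ≠ 0 := by
    rw [Rat.num_natCast, Int.cast_natCast]
    exact factorial_cast_ne_zero hk
  rw [gchoose, Rat.cast_div_of_ne_zero ((pIntSubring p).prod_mem hsub).den_ne_zero hfac,
    cast_prod_of_pInt hsub, Rat.cast_natCast, descPochhammer_eval_eq_prod_range]
  congr 1
  refine prod_congr rfl fun i _ => ?_
  rw [cast_sub_of_pInt ha (pInt_natCast i), Rat.cast_natCast]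

theorem cast_gchoose_of_cast_eq_natCast {a : ℚ} (ha : pInt p a) {N : ℕ} (haN : (a : ZMod p) = N)
    {k : ℕ} (hk : k < p) : ((gchoose a k : ℚ) : ZMod p) = N.choose k := by
  rw [cast_gchoose ha hk, haN,
    descPochhammer_eval_natCast_div_factorial N (factorial_cast_ne_zero hk)]

theorem cast_gchoose_of_cast_eq_neg_one_sub_natCast {a : ℚ} (ha : pInt p a) {m : ℕ}
    (ham : (a : ZMod p) = -1 - m) {k : ℕ} (hk : k < p) :
    ((gchoose a k : ℚ) : ZMod p) = (-1) ^ k * (m + k).choose k := by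
  rw [cast_gchoose ha hk, ham,
    descPochhammer_eval_neg_one_sub_natCast_div_factorial m (factorial_cast_ne_zero hk)]

theorem pInt_gchoose_mul_gchoose_mul_pow {a b x : ℚ} (ha : pInt p a) (hb : pInt p b)
    (hx : pInt p x) {k : ℕ} (hk : k < p) : pInt p (gchoose a k * gchoose b k * x ^ k) :=
  (pIntSubring p).mul_mem ((pIntSubring p).mul_mem (pInt_gchoose ha hk) (pInt_gchoose hb hk))
    ((pIntSubring p).pow_mem hx k)

theorem cast_sum_gchoose_mul_gchoose_mul_pow {a b x : ℚ} {A B : ℕ → ZMod p}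
    (ha : pInt p a) (hb : pInt p b) (hx : pInt p x)
    (hA : ∀ k < p, ((gchoose a k : ℚ) : ZMod p) = A k)
    (hB : ∀ k < p, ((gchoose b k : ℚ) : ZMod p) = B k) :
    ((∑ k ∈ range p, gchoose a k * gchoose b k * x ^ k : ℚ) : ZMod p)
      = ∑ k ∈ range p, A k * B k * (x : ZMod p) ^ k := by
  rw [cast_sum_of_pInt fun k hk => pInt_gchoose_mul_gchoose_mul_pow ha hb hx (mem_range.1 hk)]
  refine sum_congr rfl fun k hk => ?_
  have hk : k < p := mem_range.1 hk
  rw [cast_mul_of_pInt ((pIntSubring p).mul_mem (pInt_gchoose ha hk) (pInt_gchoose hb hk))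
      ((pIntSubring p).pow_mem hx k),
    cast_mul_of_pInt (pInt_gchoose ha hk) (pInt_gchoose hb hk), cast_pow_of_pInt hx,
    hA k hk, hB k hk]

theorem pCong_sum_gchoose_mul_gchoose_mul_one_sub_pow {a b t : ℚ} {n : ℕ} (hn : n < p)
    (han : pCong p a n) (hb : pInt p b) (ht : pInt p t) (ht0 : ¬ pCong p t 0) :
    pCong p (∑ k ∈ range p, gchoose a k * gchoose b k * (1 - t) ^ k)
      (t ^ n * ∑ k ∈ range p, gchoose a k * gchoose (-1 - b) k * (1 - 1 / t) ^ k) := by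
  set S := pIntSubring p
  have ha : pInt p a := han.pInt_of_pInt_right (pInt_natCast n)
  have hb' : pInt p (-1 - b) := S.sub_mem (S.neg_mem S.one_mem) hb
  have hT : (t : ZMod p) ≠ 0 := fun h =>
    ht0 ((pCong_iff_cast_eq ht S.zero_mem).2 (by rw [h, Rat.cast_zero]))
  have hinv : pInt p (1 / t) := by rw [one_div]; exact pInt_inv hT
  have hx : pInt p (1 - t) := S.sub_mem S.one_mem ht
  have hx' : pInt p (1 - 1 / t) := S.sub_mem S.one_mem hinv
  have han' : (a : ZMod p) = n := by
    rw [(pCong_iff_cast_eq ha (pInt_natCast n)).1 han, Rat.cast_natCast]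
  set m := (b : ZMod p).val
  have hbm : (b : ZMod p) = m := (ZMod.natCast_zmod_val _).symm
  have hbm' : ((-1 - b : ℚ) : ZMod p) = -1 - m := by
    rw [cast_sub_of_pInt (S.neg_mem S.one_mem) hb, hbm, Rat.cast_neg, Rat.cast_one]
  have hlhs := S.sum_mem fun k hk => pInt_gchoose_mul_gchoose_mul_pow ha hb hx (mem_range.1 hk)
  have hrhs := S.sum_mem fun k hk => pInt_gchoose_mul_gchoose_mul_pow ha hb' hx' (mem_range.1 hk)
  rw [pCong_iff_cast_eq hlhs (S.mul_mem (S.pow_mem ht n) hrhs),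
    cast_mul_of_pInt (S.pow_mem ht n) hrhs, cast_pow_of_pInt ht,
    cast_sum_gchoose_mul_gchoose_mul_pow ha hb hx
      (fun k => cast_gchoose_of_cast_eq_natCast ha han')
      (fun k => cast_gchoose_of_cast_eq_natCast hb hbm),
    cast_sum_gchoose_mul_gchoose_mul_pow ha hb' hx'
      (fun k => cast_gchoose_of_cast_eq_natCast ha han')
      (fun k => cast_gchoose_of_cast_eq_neg_one_sub_natCast hb' hbm'),
    cast_sub_of_pInt S.one_mem ht, cast_sub_of_pInt S.one_mem hinv, Rat.cast_one, one_div,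
    cast_inv_of_cast_ne_zero hT]
  exact sum_choose_mul_choose_mul_one_sub_pow hT hn m

end PIntegral

theorem sum_eighth_congr_general (p : ℕ) (hp : p.Prime)
    (t : ℚ) (ht : pInt p t) (ht0 : ¬ pCong p t 0)
    (n : ℕ) (hn : n < p) (han : pCong p (-1/8) n) :
    pCong p
      (∑ k ∈ Finset.range p, gchoose (-1/8) k * gchoose (-3/8) k * (1 - t) ^ k)
      (t ^ n *
        ∑ k ∈ Finset.range p, gchoose (-1/8) k * gchoose (-5/8) k * (1 - 1/t) ^ k) := by
  have := Fact.mk hp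
  have h3 : pInt p (-3/8) := by
    rw [show (-3/8 : ℚ) = (3 : ℕ) * (-1/8) by norm_num]
    exact (pIntSubring p).mul_mem (pInt_natCast 3) (han.pInt_of_pInt_right (pInt_natCast n))
  rw [show (-5/8 : ℚ) = -1 - (-3/8) by norm_num]
  exact pCong_sum_gchoose_mul_gchoose_mul_one_sub_pow hn han h3 ht ht0

theorem sum_eighth_congr (p : ℕ) (hp : p.Prime) (hodd : Odd p)
    (t : ℚ) (ht : pInt p t) (ht0 : ¬ pCong p t 0)
    (n : ℕ) (hn : n < p) (han : pCong p (-1/8) n) :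
    pCong p
      (∑ k ∈ Finset.range p, gchoose (-1/8) k * gchoose (-3/8) k * (1 - t) ^ k)
      (t ^ n *
        ∑ k ∈ Finset.range p, gchoose (-1/8) k * gchoose (-5/8) k * (1 - 1/t) ^ k) :=
  sum_eighth_congr_general p hp t ht ht0 n hn han
end
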